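/- For the wheel graph W_{n+1} = Cone(C_n) with n ≥ 4, the evaluation of the connected domination polynomial satisfies D^c_{W_{n+1}}(-1) = D^c_{C_n}(-1) = (-1)^n. -/
import Mathlib


open Finset

attribute [local instance] Classical.propDecidable

/-- `D` is a connected dominating set of `G`. -/
def ConnDomSet {V : Type*} (G : SimpleGraph V) (D : Finset V) : Prop :=
  D.Nonempty ∧ (G.induce (D : Set V)).Connected ∧
    ∀ v : V, v ∈ D ∨ ∃ u ∈ D, G.Adj u v

/-- The cycle graph `C_n` on `ZMod n`, with `i` adjacent to `i ± 1`. -/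
def cycleGraph (n : ℕ) : SimpleGraph (ZMod n) :=
  SimpleGraph.fromRel (fun i j => i = j + 1)

/-- The graph cone over `G`: a new hub vertex (`none`) joined to all vertices
of `G`.  The wheel graph is `W_{n+1} = Cone(C_n)`. -/
def coneGraph {V : Type*} (G : SimpleGraph V) : SimpleGraph (Option V) :=
  SimpleGraph.fromRel (fun a b =>
    match a, b with
    | some a, some b => G.Adj a b
    | none, some _ => True
    | _, _ => False)

set_option linter.unusedSectionVars false
set_option maxHeartbeats 1000000


section basic
variable {n : ℕ} [NeZero n]

lemma natCast_ne_zero_zmod {k : ℕ} (h1 : 0 < k) (h2 : k < n) : (k : ZMod n) ≠ 0 := by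
  intro h
  rw [ZMod.natCast_eq_zero_iff] at h
  exact absurd (Nat.le_of_dvd h1 h) (by omega)

lemma one_ne_zero_zmod (hn : 2 ≤ n) : (1 : ZMod n) ≠ 0 := by
  have := natCast_ne_zero_zmod (n := n) (k := 1) one_pos (by omega)
  simpa using this

lemma cycle_adj {a b : ZMod n} : (cycleGraph n).Adj a b ↔ a ≠ b ∧ (a = b + 1 ∨ b = a + 1) := by
  simp [cycleGraph, SimpleGraph.fromRel_adj]

lemma cycle_adj' (hn : 2 ≤ n) {a b : ZMod n} :
    (cycleGraph n).Adj a b ↔ (a = b + 1 ∨ b = a + 1) := by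
  rw [cycle_adj]
  constructor
  · tauto
  · rintro h
    refine ⟨?_, h⟩
    rintro rfl
    rcases h with h | h <;>
    · apply one_ne_zero_zmod hn
      have : a - a = (1 : ZMod n) := by nth_rewrite 1 [h]; ring
      rw [sub_self] at this
      exact this.symm

lemma reach_invariant {V : Type*} {G : SimpleGraph V} {P : V → Prop}
    (h : ∀ a b, G.Adj a b → (P a ↔ P b)) {x y : V} (hr : G.Reachable x y) : P x ↔ P y := by
  obtain ⟨w⟩ := hr
  induction w with
  | nil => exact Iff.rfl
  | cons ha _ ih => exact (h _ _ ha).trans ih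

lemma chain_reach (hn : 2 ≤ n) {s : Finset (ZMod n)} {b : ZMod n} (m : ℕ)
    (hmem : ∀ j : ℕ, j ≤ m → b + (j : ZMod n) ∈ (s : Set (ZMod n))) :
    ((cycleGraph n).induce (s : Set (ZMod n))).Reachable
      ⟨b, by simpa using hmem 0 (Nat.zero_le _)⟩ ⟨b + (m : ZMod n), hmem m le_rfl⟩ := by
  induction m with
  | zero =>
      have : (⟨b + ((0:ℕ) : ZMod n), hmem 0 le_rfl⟩ :
          (s : Set (ZMod n))) = ⟨b, by simpa using hmem 0 (Nat.zero_le _)⟩ :=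
        Subtype.ext (by push_cast; ring)
      rw [this]
  | succ k ih =>
      have h1 := ih (fun j hj => hmem j (le_trans hj (Nat.le_succ _)))
      refine h1.trans (SimpleGraph.Adj.reachable ?_)
      show (cycleGraph n).Adj (b + (k : ZMod n)) (b + ((k+1 : ℕ) : ZMod n))
      rw [cycle_adj' hn]; right; push_cast; ring

lemma induce_connected (hn : 2 ≤ n) {s : Finset (ZMod n)} {b : ZMod n} (hb : b ∈ s)
    (h : ∀ x ∈ s, ∃ k : ℕ, x = b + (k : ZMod n) ∧ ∀ j : ℕ, j ≤ k → b + (j : ZMod n) ∈ s) :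
    ((cycleGraph n).induce (s : Set (ZMod n))).Connected := by
  rw [SimpleGraph.connected_iff]
  have hb' : b ∈ (s : Set (ZMod n)) := by simpa using hb
  refine ⟨?_, ⟨⟨b, hb'⟩⟩⟩
  have key : ∀ x : (s : Set (ZMod n)),
      ((cycleGraph n).induce (s : Set (ZMod n))).Reachable ⟨b, hb'⟩ x := by
    rintro ⟨x, hx⟩
    obtain ⟨k, hxk, hall⟩ := h x (by simpa using hx)
    subst hxk
    exact chain_reach hn (s := s) (b := b) k (fun j hj => by simpa using hall j hj)
  intro x y
  exact (key x).symm.trans (key y)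

end basic

section core
variable {n : ℕ} [NeZero n]

lemma val_inj_zmod {x y : ZMod n} (h : x.val = y.val) : x = y := by
  have hx : ((x.val : ℕ) : ZMod n) = x := by simp [ZMod.natCast_val, ZMod.cast_id]
  have hy : ((y.val : ℕ) : ZMod n) = y := by simp [ZMod.natCast_val, ZMod.cast_id]
  rw [← hx, ← hy, h]

lemma core_adj (hn : 4 ≤ n) {D : Finset (ZMod n)} (hD : ConnDomSet (cycleGraph n) D)
    {u w : ZMod n} (hu : u ∉ D) (hw : w ∉ D) (huw : u ≠ w) :
    w = u + 1 ∨ u = w + 1 := by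
  by_contra hcon
  push_neg at hcon
  obtain ⟨h1, h2⟩ := hcon
  obtain ⟨hne, hconn, hdom⟩ := hD
  have h2n : 2 ≤ n := by omega
  set a := (w - u).val with ha
  have haup : a < n := ZMod.val_lt _
  have hw_eq : w = u + (a : ZMod n) := by
    have : ((a : ℕ) : ZMod n) = w - u := by simp [ha, ZMod.natCast_val, ZMod.cast_id]
    rw [this]; ring
  have ha0 : a ≠ 0 := by
    intro h
    apply huw
    have : w - u = 0 := by rwa [← ZMod.val_eq_zero]
    linear_combination -this
  have ha1 : a ≠ 1 := by
    intro h
    apply h1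
    rw [hw_eq, h]; push_cast; ring
  have han1 : a ≠ n - 1 := by
    intro h
    apply h2
    rw [hw_eq, h]
    have : ((n - 1 : ℕ) : ZMod n) + 1 = 0 := by
      have : ((n - 1 : ℕ) : ZMod n) + 1 = ((n - 1 + 1 : ℕ) : ZMod n) := by push_cast; ring
      rw [this]
      have : n - 1 + 1 = n := by omega
      rw [this, ZMod.natCast_self]
    linear_combination -this
  -- f-values of elements of D avoid 0 and a
  have hfD : ∀ x ∈ D, (x - u).val ≠ 0 ∧ (x - u).val ≠ a := by
    intro x hx
    constructor
    · intro h
      rw [ZMod.val_eq_zero, sub_eq_zero] at h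
      exact hu (h ▸ hx)
    · intro h
      have : x - u = w - u := val_inj_zmod h
      have : x = w := by linear_combination this
      exact hw (this ▸ hx)
  have fval : ∀ k : ℕ, k < n → ((u + (k : ZMod n)) - u).val = k := by
    intro k hk
    have : (u + (k : ZMod n)) - u = (k : ZMod n) := by ring
    rw [this, ZMod.val_natCast, Nat.mod_eq_of_lt hk]
  -- neighbors characterization from domination
  have dom' : ∀ y : ZMod n, y ∉ D → ∃ z ∈ D, z = y + 1 ∨ z = y - 1 := by
    intro y hy
    rcases hdom y with h | ⟨z, hz, hadj⟩
    · exact absurd h hy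
    · refine ⟨z, hz, ?_⟩
      rw [cycle_adj' h2n] at hadj
      rcases hadj with h | h
      · exact Or.inl h
      · right; rw [h]; ring
  -- d1 : element of D with f < a
  have ha2 : 2 ≤ a := by omega
  obtain ⟨d1, hd1D, hd1⟩ : ∃ d ∈ D, (d - u).val < a := by
    by_cases hy : u + ((a - 1 : ℕ) : ZMod n) ∈ D
    · exact ⟨_, hy, by rw [fval _ (by omega)]; omega⟩
    · obtain ⟨z, hzD, hz⟩ := dom' _ hy
      rcases hz with hz | hz
      · exfalso
        apply hw
        have : z = w := by
          rw [hz, hw_eq]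
          have : ((a - 1 : ℕ) : ZMod n) + 1 = ((a : ℕ) : ZMod n) := by
            have : ((a - 1 + 1 : ℕ) : ZMod n) = ((a : ℕ) : ZMod n) := by
              congr 1; omega
            push_cast at this ⊢; linear_combination this
          linear_combination this
        exact this ▸ hzD
      · have hz2 : z = u + ((a - 2 : ℕ) : ZMod n) := by
          rw [hz]
          have : ((a - 2 + 1 : ℕ) : ZMod n) = ((a - 1 : ℕ) : ZMod n) := by congr 1; omega
          push_cast at this ⊢; linear_combination -this
        have hfz : (z - u).val = a - 2 := by rw [hz2, fval _ (by omega)]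
        have hne0 : (z - u).val ≠ 0 := (hfD z hzD).1
        refine ⟨z, hzD, ?_⟩
        omega
  -- d2 : element of D with f ≥ a
  obtain ⟨d2, hd2D, hd2⟩ : ∃ d ∈ D, ¬ ((d - u).val < a) := by
    by_cases hy : u + ((n - 1 : ℕ) : ZMod n) ∈ D
    · exact ⟨_, hy, by rw [fval _ (by omega)]; omega⟩
    · obtain ⟨z, hzD, hz⟩ := dom' _ hy
      rcases hz with hz | hz
      · exfalso
        apply hu
        have : z = u := by
          rw [hz]
          have : ((n - 1 + 1 : ℕ) : ZMod n) = 0 := by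
            have : n - 1 + 1 = n := by omega
            rw [this, ZMod.natCast_self]
          push_cast at this ⊢; linear_combination this
        exact this ▸ hzD
      · have hz2 : z = u + ((n - 2 : ℕ) : ZMod n) := by
          rw [hz]
          have : ((n - 2 + 1 : ℕ) : ZMod n) = ((n - 1 : ℕ) : ZMod n) := by congr 1; omega
          push_cast at this ⊢; linear_combination -this
        have hfz : (z - u).val = n - 2 := by rw [hz2, fval _ (by omega)]
        have hnea : (z - u).val ≠ a := (hfD z hzD).2
        refine ⟨z, hzD, ?_⟩
        omega
  -- invariant along edges of induced graph
  have step : ∀ x y : ZMod n, x ∈ D → y ∈ D → y = x + 1 →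
      (((x - u).val < a) ↔ ((y - u).val < a)) := by
    intro x y hx hy hxy
    obtain ⟨hx0, hxa⟩ := hfD x hx
    obtain ⟨hy0, hya⟩ := hfD y hy
    have hkx : (x - u).val < n := ZMod.val_lt _
    have hyval : (y - u).val = ((x - u).val + 1) % n := by
      have : y - u = (((x - u).val + 1 : ℕ) : ZMod n) := by
        push_cast
        have : ((x - u).val : ZMod n) = x - u := by simp [ZMod.natCast_val, ZMod.cast_id]
        rw [this, hxy]; ring
      rw [this, ZMod.val_natCast]
    have hne : (x - u).val + 1 ≠ n := by
      intro h
      rw [h, Nat.mod_self] at hyval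
      exact hy0 hyval
    have : (y - u).val = (x - u).val + 1 := by
      rw [hyval, Nat.mod_eq_of_lt (by omega)]
    omega
  have inv : ∀ p q : (D : Set (ZMod n)),
      ((cycleGraph n).induce (D : Set (ZMod n))).Adj p q →
      ((((p : ZMod n) - u).val < a) ↔ (((q : ZMod n) - u).val < a)) := by
    rintro ⟨x, hx⟩ ⟨y, hy⟩ hadj
    have hadj' : (cycleGraph n).Adj x y := hadj
    rw [cycle_adj' h2n] at hadj'
    have hx' : x ∈ D := by simpa using hx
    have hy' : y ∈ D := by simpa using hy
    rcases hadj' with h | h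
    · exact (step y x hy' hx' h).symm
    · exact step x y hx' hy' h
  have hreach := hconn.preconnected ⟨d1, by simpa using hd1D⟩ ⟨d2, by simpa using hd2D⟩
  exact hd2 ((reach_invariant inv hreach).mp hd1)

end core

section charac
variable {n : ℕ} [NeZero n]

lemma cast_eq_n {j : ℕ} (h : ((j : ℕ) : ZMod n) = 0) (h2 : 0 < j) (h3 : j < 2 * n) :
    j = n := by
  rw [ZMod.natCast_eq_zero_iff] at h
  obtain ⟨m, hm⟩ := h
  rcases m with _ | _ | m
  · omega
  · omega
  · exfalso
    have : 2 * n ≤ j := by rw [hm]; nlinarith [Nat.zero_le m, Nat.zero_le n]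
    omega

lemma cds_univ (hn : 4 ≤ n) : ConnDomSet (cycleGraph n) (univ : Finset (ZMod n)) := by
  have h2n : 2 ≤ n := by omega
  refine ⟨⟨0, mem_univ 0⟩, ?_, fun v => Or.inl (mem_univ v)⟩
  apply induce_connected h2n (b := 0) (mem_univ 0)
  intro x _
  refine ⟨x.val, ?_, fun j _ => mem_univ _⟩
  have : ((x.val : ℕ) : ZMod n) = x := by simp [ZMod.natCast_val, ZMod.cast_id]
  rw [this, zero_add]

lemma cds_univ_sdiff_one (hn : 4 ≤ n) (i : ZMod n) :
    ConnDomSet (cycleGraph n) (univ \ {i}) := by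
  have h2n : 2 ≤ n := by omega
  have h10 : (1 : ZMod n) ≠ 0 := one_ne_zero_zmod h2n
  have hmem : ∀ x : ZMod n, x ∈ univ \ {i} ↔ x ≠ i := by
    intro x; simp
  refine ⟨⟨i + 1, (hmem _).2 (by
      intro h; apply h10; linear_combination h)⟩, ?_, ?_⟩
  · apply induce_connected h2n (b := i + 1) ((hmem _).2 (by
      intro h; apply h10; linear_combination h))
    intro x hx
    have hxi : x ≠ i := (hmem x).1 hx
    set k := (x - (i + 1)).val with hk
    have hkn : k < n := ZMod.val_lt _
    have hxk : x = i + 1 + (k : ZMod n) := by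
      have : ((k : ℕ) : ZMod n) = x - (i + 1) := by simp [hk, ZMod.natCast_val, ZMod.cast_id]
      rw [this]; ring
    refine ⟨k, hxk, ?_⟩
    intro j hj
    rw [hmem]
    intro hcon
    have hj1 : ((j + 1 : ℕ) : ZMod n) = 0 := by
      push_cast
      linear_combination hcon
    have hjn : j + 1 = n := cast_eq_n hj1 (by omega) (by omega)
    -- then j = n - 1, so k = n - 1, so x = i
    have hkval : k = n - 1 := by omega
    apply hxi
    rw [hxk, hkval]
    have : (1 : ZMod n) + ((n - 1 : ℕ) : ZMod n) = 0 := by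
      have : ((n - 1 + 1 : ℕ) : ZMod n) = 0 := by
        have : n - 1 + 1 = n := by omega
        rw [this, ZMod.natCast_self]
      push_cast at this ⊢
      linear_combination this
    linear_combination this
  · intro v
    by_cases hv : v = i
    · right
      refine ⟨i + 1, (hmem _).2 (by intro h; apply h10; linear_combination h), ?_⟩
      rw [cycle_adj' h2n]; left; rw [hv]
    · exact Or.inl ((hmem v).2 hv)

lemma cds_univ_sdiff_two (hn : 4 ≤ n) (i : ZMod n) :
    ConnDomSet (cycleGraph n) (univ \ {i, i + 1}) := by
  have h2n : 2 ≤ n := by omega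
  have h10 : (1 : ZMod n) ≠ 0 := one_ne_zero_zmod h2n
  have h20 : (2 : ZMod n) ≠ 0 := by
    have := natCast_ne_zero_zmod (n := n) (k := 2) (by omega) (by omega)
    intro h; apply this; push_cast; exact h
  have hmem : ∀ x : ZMod n, x ∈ univ \ {i, i + 1} ↔ x ≠ i ∧ x ≠ i + 1 := by
    intro x; simp [not_or]
  have hb : (i + 2 : ZMod n) ∈ univ \ {i, i + 1} := by
    rw [hmem]
    constructor
    · intro h; apply h20; linear_combination h
    · intro h; apply h10; linear_combination h
  refine ⟨⟨i + 2, hb⟩, ?_, ?_⟩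
  · apply induce_connected h2n (b := i + 2) hb
    intro x hx
    obtain ⟨hxi, hxi1⟩ := (hmem x).1 hx
    set k := (x - (i + 2)).val with hk
    have hkn : k < n := ZMod.val_lt _
    have hxk : x = i + 2 + (k : ZMod n) := by
      have : ((k : ℕ) : ZMod n) = x - (i + 2) := by simp [hk, ZMod.natCast_val, ZMod.cast_id]
      rw [this]; ring
    -- k ≤ n - 3
    have hkub : k ≤ n - 3 := by
      by_contra hcon
      have : k = n - 2 ∨ k = n - 1 := by omega
      rcases this with h | h
      · apply hxi
        rw [hxk, h]
        have : (2 : ZMod n) + ((n - 2 : ℕ) : ZMod n) = 0 := by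
          have : ((n - 2 + 2 : ℕ) : ZMod n) = 0 := by
            have : n - 2 + 2 = n := by omega
            rw [this, ZMod.natCast_self]
          push_cast at this ⊢
          linear_combination this
        linear_combination this
      · apply hxi1
        rw [hxk, h]
        have : ((n - 1 + 1 : ℕ) : ZMod n) = 0 := by
          have : n - 1 + 1 = n := by omega
          rw [this, ZMod.natCast_self]
        push_cast at this ⊢
        linear_combination this
    refine ⟨k, hxk, ?_⟩
    intro j hj
    rw [hmem]
    constructor
    · intro hcon
      have hj2 : ((j + 2 : ℕ) : ZMod n) = 0 := by
        push_cast
        linear_combination hcon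
      have := cast_eq_n hj2 (by omega) (by omega)
      omega
    · intro hcon
      have hj1 : ((j + 1 : ℕ) : ZMod n) = 0 := by
        push_cast
        linear_combination hcon
      have := cast_eq_n hj1 (by omega) (by omega)
      omega
  · intro v
    by_cases hv : v = i
    · right
      refine ⟨i - 1, ?_, ?_⟩
      · rw [hmem]
        constructor
        · intro h; apply h10; linear_combination -h
        · intro h; apply h20; linear_combination -h
      · rw [cycle_adj' h2n]; right; rw [hv]; ring
    · by_cases hv1 : v = i + 1
      · right
        refine ⟨i + 2, hb, ?_⟩
        rw [cycle_adj' h2n]; left; rw [hv1]; ring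
      · exact Or.inl ((hmem v).2 ⟨hv, hv1⟩)

lemma cds_iff (hn : 4 ≤ n) (D : Finset (ZMod n)) :
    ConnDomSet (cycleGraph n) D ↔
      D = univ ∨ (∃ i, D = univ \ {i}) ∨ ∃ i, D = univ \ {i, i + 1} := by
  constructor
  · intro hD
    by_cases hDu : D = univ
    · exact Or.inl hDu
    obtain ⟨u, hu⟩ : ∃ u, u ∉ D := by
      by_contra hcon
      push_neg at hcon
      exact hDu (Finset.eq_univ_iff_forall.2 hcon)
    by_cases hw : ∃ w, w ∉ D ∧ w ≠ u
    · obtain ⟨w, hwD, hwu⟩ := hw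
      right; right
      have hcore := core_adj hn hD hu hwD (Ne.symm hwu)
      -- pick i such that {i, i+1} = {u, w}
      obtain ⟨i, hiD, hi1D, hiu : ({i, i+1} : Finset (ZMod n)) = {u, w}⟩ :
          ∃ i, i ∉ D ∧ i + 1 ∉ D ∧ ({i, i+1} : Finset (ZMod n)) = {u, w} := by
        rcases hcore with h | h
        · exact ⟨u, hu, by rw [← h]; exact hwD, by rw [← h]⟩
        · refine ⟨w, hwD, by rw [← h]; exact hu, ?_⟩
          rw [← h]
          exact Finset.pair_comm w u
      refine ⟨i, ?_⟩
      ext x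
      simp only [Finset.mem_sdiff, Finset.mem_univ, true_and, Finset.mem_insert,
        Finset.mem_singleton, not_or]
      constructor
      · intro hx
        exact ⟨fun h => hiD (h ▸ hx), fun h => hi1D (h ▸ hx)⟩
      · rintro ⟨hxi, hxi1⟩
        by_contra hxD
        have c1 := core_adj hn hD hiD hxD (Ne.symm hxi)
        have c2 := core_adj hn hD hi1D hxD (Ne.symm hxi1)
        have hxm1 : i = x + 1 := by
          rcases c1 with h | h
          · exact absurd h hxi1
          · exact h
        rcases c2 with h | h
        · -- x = i + 2, and i = x + 1, so 3 = 0
          have : ((3 : ℕ) : ZMod n) = 0 := by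
            push_cast
            linear_combination -h - hxm1
          exact natCast_ne_zero_zmod (by omega) (by omega) this
        · -- i + 1 = x + 1 so x = i
          apply hxi
          linear_combination -h
    · push_neg at hw
      right; left
      refine ⟨u, ?_⟩
      ext x
      simp only [Finset.mem_sdiff, Finset.mem_univ, true_and, Finset.mem_singleton]
      constructor
      · intro hx h; exact hu (h ▸ hx)
      · intro hx
        by_contra hxD
        exact hx (hw x hxD)
  · rintro (rfl | ⟨i, rfl⟩ | ⟨i, rfl⟩)
    · exact cds_univ hn
    · exact cds_univ_sdiff_one hn i
    · exact cds_univ_sdiff_two hn i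

end charac

section sum2
variable {n : ℕ} [NeZero n]

lemma card_zmod_univ : (univ : Finset (ZMod n)).card = n := by
  rw [Finset.card_univ, ZMod.card]

lemma card_sdiff_one (hn : 4 ≤ n) (i : ZMod n) : ((univ : Finset (ZMod n)) \ {i}).card = n - 1 := by
  rw [Finset.card_sdiff_of_subset (Finset.subset_univ _), card_zmod_univ, Finset.card_singleton]

lemma card_sdiff_two (hn : 4 ≤ n) (i : ZMod n) :
    ((univ : Finset (ZMod n)) \ {i, i + 1}).card = n - 2 := by
  have h10 : (1 : ZMod n) ≠ 0 := one_ne_zero_zmod (by omega)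
  have hii : i ∉ ({i + 1} : Finset (ZMod n)) := by
    simp only [Finset.mem_singleton]
    intro h; apply h10; linear_combination -h
  rw [Finset.card_sdiff_of_subset (Finset.subset_univ _), card_zmod_univ,
    Finset.card_insert_of_notMem hii, Finset.card_singleton]

lemma cycle_sum (hn : 4 ≤ n) :
    (∑ D : Finset (ZMod n),
        if ConnDomSet (cycleGraph n) D then (-1 : ℤ) ^ D.card else 0) = (-1 : ℤ) ^ n := by
  classical
  have h10 : (1 : ZMod n) ≠ 0 := one_ne_zero_zmod (by omega)
  have h20 : (2 : ZMod n) ≠ 0 := by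
    have := natCast_ne_zero_zmod (n := n) (k := 2) (by omega) (by omega)
    intro h; apply this; push_cast; exact h
  set A : Finset (Finset (ZMod n)) := {univ} with hA
  set B : Finset (Finset (ZMod n)) := Finset.image (fun i => univ \ {i}) univ with hB
  set C : Finset (Finset (ZMod n)) := Finset.image (fun i => univ \ {i, i + 1}) univ with hC
  have cardA : ∀ D ∈ A, D.card = n := by
    intro D hD; rw [hA, Finset.mem_singleton] at hD; rw [hD, card_zmod_univ]
  have cardB : ∀ D ∈ B, D.card = n - 1 := by
    intro D hD; rw [hB, Finset.mem_image] at hD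
    obtain ⟨i, _, rfl⟩ := hD; exact card_sdiff_one hn i
  have cardC : ∀ D ∈ C, D.card = n - 2 := by
    intro D hD; rw [hC, Finset.mem_image] at hD
    obtain ⟨i, _, rfl⟩ := hD; exact card_sdiff_two hn i
  have hABC : Disjoint A (B ∪ C) := by
    rw [Finset.disjoint_left]
    intro D hDA hDBC
    rcases Finset.mem_union.1 hDBC with h | h
    · have := cardA D hDA; have := cardB D h; omega
    · have := cardA D hDA; have := cardC D h; omega
  have hBC : Disjoint B C := by
    rw [Finset.disjoint_left]
    intro D hDB hDC
    have := cardB D hDB; have := cardC D hDC; omega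
  have hfilter : (univ : Finset (Finset (ZMod n))).filter
      (fun D => ConnDomSet (cycleGraph n) D) = A ∪ (B ∪ C) := by
    ext D
    simp only [Finset.mem_filter, Finset.mem_univ, true_and, Finset.mem_union, hA, hB, hC,
      Finset.mem_singleton, Finset.mem_image, cds_iff hn]
    constructor
    · rintro (h | ⟨i, h⟩ | ⟨i, h⟩)
      · exact Or.inl h
      · exact Or.inr (Or.inl ⟨i, h.symm⟩)
      · exact Or.inr (Or.inr ⟨i, h.symm⟩)
    · rintro (h | ⟨i, h⟩ | ⟨i, h⟩)
      · exact Or.inl h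
      · exact Or.inr (Or.inl ⟨i, h.symm⟩)
      · exact Or.inr (Or.inr ⟨i, h.symm⟩)
  have hinjB : Set.InjOn (fun i : ZMod n => univ \ {i}) ↑(univ : Finset (ZMod n)) := by
    intro i _ j _ h
    simp only at h
    have : ({i} : Finset (ZMod n)) = {j} := by
      have h1 : univ \ (univ \ ({i} : Finset (ZMod n))) = univ \ (univ \ {j}) := by rw [h]
      rwa [Finset.sdiff_sdiff_self_left, Finset.sdiff_sdiff_self_left,
        Finset.univ_inter, Finset.univ_inter] at h1
    exact Finset.singleton_injective this
  have hinjC : Set.InjOn (fun i : ZMod n => univ \ {i, i + 1}) ↑(univ : Finset (ZMod n)) := by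
    intro i _ j _ h
    simp only at h
    have hpair : ({i, i + 1} : Finset (ZMod n)) = {j, j + 1} := by
      have h1 : univ \ (univ \ ({i, i+1} : Finset (ZMod n))) = univ \ (univ \ {j, j+1}) := by
        rw [h]
      rwa [Finset.sdiff_sdiff_self_left, Finset.sdiff_sdiff_self_left,
        Finset.univ_inter, Finset.univ_inter] at h1
    have hi : i ∈ ({j, j + 1} : Finset (ZMod n)) := by
      rw [← hpair]; simp
    have hi1 : i + 1 ∈ ({j, j + 1} : Finset (ZMod n)) := by
      rw [← hpair]; simp
    simp only [Finset.mem_insert, Finset.mem_singleton] at hi hi1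
    rcases hi with h1 | h1
    · exact h1
    · exfalso
      rcases hi1 with h2 | h2 <;>
      first
        | (apply h20; linear_combination h2 - h1)
        | (apply h10; linear_combination h2 - h1)
        | (apply h10; linear_combination h1 - h2)
  rw [← Finset.sum_filter, hfilter, Finset.sum_union hABC, Finset.sum_union hBC]
  have sumA : ∑ D ∈ A, (-1 : ℤ) ^ D.card = (-1 : ℤ) ^ n := by
    rw [hA, Finset.sum_singleton, card_zmod_univ]
  have sumB : ∑ D ∈ B, (-1 : ℤ) ^ D.card = n * (-1 : ℤ) ^ (n - 1) := by
    rw [hB, Finset.sum_image hinjB]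
    have : ∀ i ∈ (univ : Finset (ZMod n)), (-1 : ℤ) ^ ((univ : Finset (ZMod n)) \ {i}).card
        = (-1 : ℤ) ^ (n - 1) := fun i _ => by rw [card_sdiff_one hn i]
    rw [Finset.sum_congr rfl this, Finset.sum_const, card_zmod_univ, nsmul_eq_mul]
  have sumC : ∑ D ∈ C, (-1 : ℤ) ^ D.card = n * (-1 : ℤ) ^ (n - 2) := by
    rw [hC, Finset.sum_image hinjC]
    have : ∀ i ∈ (univ : Finset (ZMod n)), (-1 : ℤ) ^ ((univ : Finset (ZMod n)) \ {i, i+1}).card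
        = (-1 : ℤ) ^ (n - 2) := fun i _ => by rw [card_sdiff_two hn i]
    rw [Finset.sum_congr rfl this, Finset.sum_const, card_zmod_univ, nsmul_eq_mul]
  rw [sumA, sumB, sumC]
  obtain ⟨m, rfl⟩ : ∃ m, n = m + 2 := ⟨n - 2, by omega⟩
  have e1 : m + 2 - 1 = m + 1 := by omega
  have e2 : m + 2 - 2 = m := by omega
  rw [e1, e2]
  ring

end sum2

section cone
variable {V : Type*} (G : SimpleGraph V)

lemma cone_adj_none_some (v : V) : (coneGraph G).Adj none (some v) := by
  simp [coneGraph, SimpleGraph.fromRel_adj]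

lemma cone_adj_some_some {a b : V} : (coneGraph G).Adj (some a) (some b) ↔ G.Adj a b := by
  simp only [coneGraph, SimpleGraph.fromRel_adj]
  constructor
  · rintro ⟨hne, h | h⟩
    · exact h
    · exact h.symm
  · intro h
    exact ⟨by simpa using h.ne, Or.inl h⟩

def someEmb (V : Type*) : V ↪ Option V := ⟨some, Option.some_injective V⟩

lemma hub_cds {D : Finset (Option V)} (hD : none ∈ D) : ConnDomSet (coneGraph G) D := by
  have hD' : none ∈ (D : Set (Option V)) := by simpa using hD
  refine ⟨⟨none, hD⟩, ?_, ?_⟩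
  · rw [SimpleGraph.connected_iff]
    refine ⟨?_, ⟨⟨none, hD'⟩⟩⟩
    have key : ∀ x : (D : Set (Option V)),
        ((coneGraph G).induce (D : Set (Option V))).Reachable x ⟨none, hD'⟩ := by
      rintro ⟨x, hx⟩
      match x with
      | none => exact SimpleGraph.Reachable.refl _
      | some v =>
          apply SimpleGraph.Adj.reachable
          show (coneGraph G).Adj (some v) none
          exact (cone_adj_none_some G v).symm
    intro x y
    exact (key x).trans (key y).symm
  · intro v
    match v with
    | none => exact Or.inl hD
    | some w => exact Or.inr ⟨none, hD, cone_adj_none_some G w⟩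

lemma coe_map_someEmb (S : Finset V) :
    ((S.map (someEmb V) : Finset (Option V)) : Set (Option V)) = some '' (S : Set V) := by
  rw [Finset.coe_map]
  rfl

lemma cone_induce_iso (S : Finset V) :
    Nonempty (G.induce (S : Set V) ≃g
      (coneGraph G).induce ((S.map (someEmb V) : Finset (Option V)) : Set (Option V))) := by
  rw [coe_map_someEmb]
  refine ⟨⟨Equiv.Set.image some (S : Set V) (Option.some_injective V), ?_⟩⟩
  intro a b
  show (coneGraph G).Adj (some a.1) (some b.1) ↔ G.Adj a.1 b.1
  exact cone_adj_some_some G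

lemma map_cds_iff (S : Finset V) :
    ConnDomSet (coneGraph G) (S.map (someEmb V)) ↔ ConnDomSet G S := by
  obtain ⟨iso⟩ := cone_induce_iso G S
  constructor
  · rintro ⟨hne, hconn, hdom⟩
    refine ⟨?_, iso.connected_iff.2 hconn, ?_⟩
    · obtain ⟨x, hx⟩ := hne
      rw [Finset.mem_map] at hx
      obtain ⟨y, hy, _⟩ := hx
      exact ⟨y, hy⟩
    · intro v
      rcases hdom (some v) with h | ⟨u, hu, hadj⟩
      · left
        rw [Finset.mem_map] at h
        obtain ⟨y, hy, hy2⟩ := h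
        have : y = v := Option.some_injective V hy2
        exact this ▸ hy
      · right
        rw [Finset.mem_map] at hu
        obtain ⟨z, hz, rfl⟩ := hu
        exact ⟨z, hz, (cone_adj_some_some G).1 hadj⟩
  · rintro ⟨hne, hconn, hdom⟩
    refine ⟨?_, iso.connected_iff.1 hconn, ?_⟩
    · obtain ⟨x, hx⟩ := hne
      exact ⟨some x, Finset.mem_map_of_mem _ hx⟩
    · intro v
      match v with
      | none =>
          obtain ⟨x, hx⟩ := hne
          exact Or.inr ⟨some x, Finset.mem_map_of_mem _ hx,
            (cone_adj_none_some G x).symm⟩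
      | some w =>
          rcases hdom w with h | ⟨u, hu, hadj⟩
          · exact Or.inl (Finset.mem_map_of_mem _ h)
          · exact Or.inr ⟨some u, Finset.mem_map_of_mem _ hu,
              (cone_adj_some_some G).2 hadj⟩

end cone

section split
variable {W : Type*} [Fintype W] [Nonempty W] [DecidableEq W]

lemma filter_none_notMem :
    (univ : Finset (Finset (Option W))).filter (fun D => none ∉ D)
      = Finset.image (fun S : Finset W => S.map (someEmb W)) univ := by
  classical
  ext D
  simp only [Finset.mem_filter, Finset.mem_univ, true_and, Finset.mem_image]
  constructor
  · intro hD
    refine ⟨D.eraseNone, ?_⟩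
    ext a
    match a with
    | none =>
        simp only [Finset.mem_map]
        constructor
        · rintro ⟨y, _, hy⟩; exact absurd hy (by simp [someEmb])
        · intro h; exact absurd h hD
    | some b =>
        simp only [Finset.mem_map, someEmb, Function.Embedding.coeFn_mk]
        constructor
        · rintro ⟨y, hy, hy2⟩
          have : y = b := Option.some_injective _ hy2
          subst this
          exact (Finset.mem_eraseNone.1 hy)
        · intro h
          exact ⟨b, Finset.mem_eraseNone.2 h, rfl⟩
  · rintro ⟨S, rfl⟩
    simp [Finset.mem_map, someEmb]

lemma filter_none_mem :
    (univ : Finset (Finset (Option W))).filter (fun D => none ∈ D)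
      = Finset.image (fun S : Finset W => insert none (S.map (someEmb W))) univ := by
  classical
  ext D
  simp only [Finset.mem_filter, Finset.mem_univ, true_and, Finset.mem_image]
  constructor
  · intro hD
    refine ⟨D.eraseNone, ?_⟩
    ext a
    match a with
    | none => simpa using hD
    | some b =>
        simp only [Finset.mem_insert, Finset.mem_map, someEmb, Function.Embedding.coeFn_mk,
          reduceCtorEq, false_or]
        constructor
        · rintro ⟨y, hy, hy2⟩
          have : y = b := Option.some_injective _ hy2
          subst this
          exact (Finset.mem_eraseNone.1 hy)
        · intro h
          exact ⟨b, Finset.mem_eraseNone.2 h, rfl⟩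
  · rintro ⟨S, rfl⟩
    exact Finset.mem_insert_self _ _

lemma none_notMem_map (S : Finset W) : none ∉ S.map (someEmb W) := by
  simp [Finset.mem_map, someEmb]

lemma sum_neg_one_pow_finset : ∑ S : Finset W, (-1 : ℤ) ^ S.card = 0 := by
  classical
  rw [← Finset.powerset_univ, Finset.sum_powerset_neg_one_pow_card, if_neg]
  exact (Finset.univ_nonempty).ne_empty

end split


/-- For the wheel graph `W_{n+1} = Cone(C_n)` with `n ≥ 4`,
`D^c_{W_{n+1}}(-1) = D^c_{C_n}(-1) = (-1)^n`. -/
theorem wheel_connected_domination_at_neg_one (n : ℕ) [NeZero n] (hn : 4 ≤ n) :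
    (∑ D : Finset (Option (ZMod n)),
        if ConnDomSet (coneGraph (cycleGraph n)) D then (-1 : ℤ) ^ D.card
        else 0) =
      (∑ D : Finset (ZMod n),
        if ConnDomSet (cycleGraph n) D then (-1 : ℤ) ^ D.card else 0) ∧
    (∑ D : Finset (ZMod n),
        if ConnDomSet (cycleGraph n) D then (-1 : ℤ) ^ D.card else 0) =
      (-1 : ℤ) ^ n := by
  classical
  refine ⟨?_, cycle_sum hn⟩
  rw [← Finset.sum_filter_add_sum_filter_not univ
    (fun D : Finset (Option (ZMod n)) => none ∈ D)]
  have hinj1 : Set.InjOn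
      (fun S : Finset (ZMod n) => insert none (S.map (someEmb (ZMod n))))
      ↑(univ : Finset (Finset (ZMod n))) := by
    intro A _ B _ h
    simp only at h
    have h2 := congrArg (fun t => Finset.erase t none) h
    simp only [Finset.erase_insert (none_notMem_map A),
      Finset.erase_insert (none_notMem_map B)] at h2
    exact Finset.map_injective _ h2
  have hinj2 : Set.InjOn (fun S : Finset (ZMod n) => S.map (someEmb (ZMod n)))
      ↑(univ : Finset (Finset (ZMod n))) :=
    fun A _ B _ h => Finset.map_injective _ h
  have hf1 : (filter (fun x : Finset (Option (ZMod n)) => none ∈ x) univ)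
      = Finset.image (fun S : Finset (ZMod n) => insert none (S.map (someEmb (ZMod n)))) univ := by
    ext D
    rw [Finset.mem_filter]
    have h := Finset.ext_iff.1 (filter_none_mem (W := ZMod n)) D
    rw [Finset.mem_filter] at h
    simpa using h
  have hf2 : (filter (fun x : Finset (Option (ZMod n)) => none ∉ x) univ)
      = Finset.image (fun S : Finset (ZMod n) => S.map (someEmb (ZMod n))) univ := by
    ext D
    rw [Finset.mem_filter]
    have h := Finset.ext_iff.1 (filter_none_notMem (W := ZMod n)) D
    rw [Finset.mem_filter] at h
    simpa using h
  rw [hf1, hf2, Finset.sum_image hinj1, Finset.sum_image hinj2]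
  have h1 : (∑ S : Finset (ZMod n),
      if ConnDomSet (coneGraph (cycleGraph n)) (insert none (S.map (someEmb (ZMod n)))) then
        (-1 : ℤ) ^ (insert none (S.map (someEmb (ZMod n)))).card else 0) = 0 := by
    have heach : ∀ S : Finset (ZMod n),
        (if ConnDomSet (coneGraph (cycleGraph n)) (insert none (S.map (someEmb (ZMod n)))) then
          (-1 : ℤ) ^ (insert none (S.map (someEmb (ZMod n)))).card else 0)
        = -((-1 : ℤ) ^ S.card) := by
      intro S
      rw [if_pos (hub_cds _ (Finset.mem_insert_self _ _)),
        Finset.card_insert_of_notMem (none_notMem_map S), Finset.card_map, pow_succ]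
      ring
    rw [Finset.sum_congr rfl (fun S _ => heach S)]
    have : (∑ S : Finset (ZMod n), -((-1 : ℤ) ^ S.card))
        = -(∑ S : Finset (ZMod n), (-1 : ℤ) ^ S.card) := by
      rw [← Finset.sum_neg_distrib]
    rw [this, sum_neg_one_pow_finset, neg_zero]
  have h2 : ∀ S : Finset (ZMod n),
      (if ConnDomSet (coneGraph (cycleGraph n)) (S.map (someEmb (ZMod n))) then
        (-1 : ℤ) ^ (S.map (someEmb (ZMod n))).card else 0)
      = (if ConnDomSet (cycleGraph n) S then (-1 : ℤ) ^ S.card else 0) := by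
    intro S
    rw [Finset.card_map]
    by_cases h : ConnDomSet (cycleGraph n) S
    · rw [if_pos ((map_cds_iff _ S).2 h), if_pos h]
    · rw [if_neg (fun hc => h ((map_cds_iff _ S).1 hc)), if_neg h]
  rw [h1, Finset.sum_congr rfl (fun S _ => h2 S), zero_add]
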